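/- arXiv:2211.16236 — 2 statements merged into one kernel-verified Lean document; each statement's English description precedes it below -/
import Mathlib

section
/- For real numbers 0 < λ_min ≤ λ_max and any μ̃ ∈ [1/λ_max, 1/λ_min], the inequality sqrt(1 − μ̃²λ_max λ_min / (μ̃(λ_max + λ_min) − 1)) ≤ (κ−1)/(κ+1) holds, where κ = λ_max/λ_min. -/
theorem stmt_4 (lmin lmax μ : ℝ) (h0 : 0 < lmin) (hle : lmin ≤ lmax)
    (hμ1 : 1 / lmax ≤ μ) (hμ2 : μ ≤ 1 / lmin) :
    Real.sqrt (1 - μ ^ 2 * lmax * lmin / (μ * (lmax + lmin) - 1)) ≤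
      (lmax / lmin - 1) / (lmax / lmin + 1) := by
  have ha : 0 < lmax := lt_of_lt_of_le h0 hle
  have hμa : 1 ≤ μ * lmax := by
    rw [div_le_iff₀ ha] at hμ1; linarith
  have hμpos : 0 < μ := by nlinarith
  have hD : 0 < μ * (lmax + lmin) - 1 := by nlinarith
  have hRnn : 0 ≤ (lmax - lmin) / (lmax + lmin) := by
    apply div_nonneg (by linarith) (by positivity)
  have hEq : (lmax / lmin - 1) / (lmax / lmin + 1) = (lmax - lmin) / (lmax + lmin) := by
    rw [div_eq_div_iff (by positivity) (by positivity)]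
    field_simp
  rw [hEq]
  have key : 1 - μ ^ 2 * lmax * lmin / (μ * (lmax + lmin) - 1)
      ≤ ((lmax - lmin) / (lmax + lmin)) ^ 2 := by
    have h2 : 4 * lmax * lmin / (lmax + lmin) ^ 2
        ≤ μ ^ 2 * lmax * lmin / (μ * (lmax + lmin) - 1) := by
      rw [div_le_div_iff₀ (by positivity) hD]
      nlinarith [sq_nonneg (μ * (lmax + lmin) - 2), mul_pos h0 ha]
    have h3 : ((lmax - lmin) / (lmax + lmin)) ^ 2
        = 1 - 4 * lmax * lmin / (lmax + lmin) ^ 2 := by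
      field_simp
      ring
    linarith
  calc Real.sqrt (1 - μ ^ 2 * lmax * lmin / (μ * (lmax + lmin) - 1))
      ≤ Real.sqrt (((lmax - lmin) / (lmax + lmin)) ^ 2) := Real.sqrt_le_sqrt key
    _ = (lmax - lmin) / (lmax + lmin) := Real.sqrt_sq hRnn
end

section
/- Let X_t and X⋆ be n₁×n₂ matrices of rank r with compact SVDs X_t = U_t Σ_t V_tᵀ and X⋆ = U⋆ Σ⋆ V⋆ᵀ. If ‖X_t − X⋆‖ < σ_r(X⋆), then ‖P_{U⋆}^⊥ X_t P_{V⋆}^⊥‖_F ≤ ‖X_t − X⋆‖_F² / σ_r(X⋆), where P_{U⋆}^⊥ = I − U⋆U⋆ᵀ and P_{V⋆}^⊥ = I − V⋆V⋆ᵀ. -/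
/-!
Write `E = Xt - Xs`, `P = 1 - Us Usᵀ`, `Q = 1 - Vs Vsᵀ` and `δ = ‖E‖`. The core
`B = Usᵀ Xt Vs = Σ + Usᵀ E Vs` satisfies `‖B y‖ ≥ (σ_r - δ) ‖y‖`, so it is invertible, and since
`Xt` has rank `r` it factors as `Xt = Xt Vs B⁻¹ Usᵀ Xt`. Because `P Xs = 0` and `Xs Q = 0`, this
gives `P Xt Q = P E Q = (P E Vs) B⁻¹ (Usᵀ E Q)`, hence `(σ_r - δ) t ≤ a b` for the Frobenius
norms `t, a, b` of `P E Q`, `P E Vs`, `Usᵀ E Q`. These are disjoint blocks of `E` in the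
orthogonal splittings `Us ⊕ P` and `Vs ⊕ Q`, so `a² + b² + t² ≤ ‖E‖_F²`; together with
`δ ≤ ‖E‖_F` this yields `σ_r t ≤ a b + δ t ≤ (a² + b² + t² + δ²) / 2 ≤ ‖E‖_F²`.
-/

open Matrix

/-- The spectral (ℓ²-operator) norm of a real matrix. -/
noncomputable def specNorm {m n : ℕ} (M : Matrix (Fin m) (Fin n) ℝ) : ℝ :=
  ‖LinearMap.toContinuousLinearMap (Matrix.toEuclideanLin M)‖

/-- The Frobenius norm of a real matrix. -/
noncomputable def frobNorm {m n : ℕ} (M : Matrix (Fin m) (Fin n) ℝ) : ℝ :=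
  Real.sqrt (∑ i, ∑ j, (M i j) ^ 2)

open WithLp

section SemiOrthogonal

variable {m n : Type*} [Fintype m] [Fintype n]

theorem inner_toLp_mulVec (A : Matrix m n ℝ) (x : n → ℝ) (y : m → ℝ) :
    inner ℝ (toLp 2 (A *ᵥ x)) (toLp 2 y) = inner ℝ (toLp 2 x) (toLp 2 (Aᵀ *ᵥ y)) := by
  simp only [EuclideanSpace.inner_toLp_toLp, star_trivial]
  rw [dotProduct_mulVec, ← mulVec_transpose, dotProduct_comm]

variable [DecidableEq n] {U : Matrix m n ℝ}

theorem norm_toLp_mulVec_of_transpose_mul_self (hU : Uᵀ * U = 1) (x : n → ℝ) :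
    ‖toLp 2 (U *ᵥ x)‖ = ‖toLp 2 x‖ := by
  refine (sq_eq_sq₀ (norm_nonneg _) (norm_nonneg _)).1 ?_
  rw [← real_inner_self_eq_norm_sq, ← real_inner_self_eq_norm_sq, inner_toLp_mulVec,
    mulVec_mulVec, hU, one_mulVec]

variable [DecidableEq m]

theorem one_sub_mul_transpose_mul_self (hU : Uᵀ * U = 1) : (1 - U * Uᵀ) * U = 0 := by
  rw [Matrix.sub_mul, Matrix.one_mul, Matrix.mul_assoc, hU, Matrix.mul_one, sub_self]

theorem transpose_mul_one_sub_mul_transpose (hU : Uᵀ * U = 1) : Uᵀ * (1 - U * Uᵀ) = 0 := by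
  rw [Matrix.mul_sub, Matrix.mul_one, ← Matrix.mul_assoc, hU, Matrix.one_mul, sub_self]

theorem norm_sq_toLp_eq_add_of_transpose_mul_self (hU : Uᵀ * U = 1) (z : m → ℝ) :
    ‖toLp 2 z‖ ^ 2 = ‖toLp 2 (Uᵀ *ᵥ z)‖ ^ 2 + ‖toLp 2 ((1 - U * Uᵀ) *ᵥ z)‖ ^ 2 := by
  have hz : toLp 2 z = toLp 2 (U *ᵥ (Uᵀ *ᵥ z)) + toLp 2 ((1 - U * Uᵀ) *ᵥ z) := by
    rw [← toLp_add, sub_mulVec, one_mulVec, mulVec_mulVec, add_sub_cancel]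
  have horth : inner ℝ (toLp 2 (U *ᵥ (Uᵀ *ᵥ z))) (toLp 2 ((1 - U * Uᵀ) *ᵥ z)) = 0 := by
    rw [inner_toLp_mulVec, mulVec_mulVec, transpose_mul_one_sub_mul_transpose hU, zero_mulVec,
      toLp_zero, inner_zero_right]
  rw [hz, sq, sq, sq, norm_add_sq_eq_norm_sq_add_norm_sq_real horth,
    norm_toLp_mulVec_of_transpose_mul_self hU]

theorem norm_toLp_transpose_mulVec_le (hU : Uᵀ * U = 1) (z : m → ℝ) :
    ‖toLp 2 (Uᵀ *ᵥ z)‖ ≤ ‖toLp 2 z‖ := by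
  refine (pow_le_pow_iff_left₀ (norm_nonneg _) (norm_nonneg _) two_ne_zero).1 ?_
  rw [norm_sq_toLp_eq_add_of_transpose_mul_self hU z]
  exact le_add_of_nonneg_right (sq_nonneg _)

end SemiOrthogonal

section LowerBound

variable {m n : Type*} [Fintype m] [Fintype n]

theorem mul_norm_toLp_le_norm_diagonal_mulVec [DecidableEq n] {σ : n → ℝ} {c : ℝ} (hc : 0 ≤ c)
    (hσ : ∀ i, c ≤ σ i) (y : n → ℝ) : c * ‖toLp 2 y‖ ≤ ‖toLp 2 (diagonal σ *ᵥ y)‖ := by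
  refine (pow_le_pow_iff_left₀ (by positivity) (norm_nonneg _) two_ne_zero).1 ?_
  simp only [mul_pow, EuclideanSpace.real_norm_sq_eq, mulVec_diagonal, Finset.mul_sum]
  gcongr with i
  exact hσ i

theorem sub_mul_norm_toLp_le_norm_add_mulVec {D E : Matrix m n ℝ} {c δ : ℝ}
    (hD : ∀ y, c * ‖toLp 2 y‖ ≤ ‖toLp 2 (D *ᵥ y)‖) (hE : ∀ y, ‖toLp 2 (E *ᵥ y)‖ ≤ δ * ‖toLp 2 y‖)
    (y : n → ℝ) : (c - δ) * ‖toLp 2 y‖ ≤ ‖toLp 2 ((D + E) *ᵥ y)‖ := by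
  have htri : ‖toLp 2 (D *ᵥ y)‖ ≤ ‖toLp 2 ((D + E) *ᵥ y)‖ + ‖toLp 2 (E *ᵥ y)‖ := by
    simpa only [add_mulVec, toLp_add, add_sub_cancel_right] using
      norm_sub_le (toLp 2 ((D + E) *ᵥ y)) (toLp 2 (E *ᵥ y))
  linarith [hD y, hE y]

theorem isUnit_of_mul_norm_toLp_le [DecidableEq n] {B : Matrix n n ℝ} {c : ℝ} (hc : 0 < c)
    (hB : ∀ y, c * ‖toLp 2 y‖ ≤ ‖toLp 2 (B *ᵥ y)‖) : IsUnit B := by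
  refine mulVec_injective_iff_isUnit.1 fun a b hab => ?_
  have h := hB (a - b)
  rw [mulVec_sub, hab, sub_self, toLp_zero, norm_zero] at h
  have : ‖toLp 2 (a - b)‖ = 0 := le_antisymm (nonpos_of_mul_nonpos_right h hc) (norm_nonneg _)
  simpa [sub_eq_zero] using this

end LowerBound

section Frobenius

attribute [local instance] Matrix.frobeniusSeminormedAddCommGroup

variable {l m n : ℕ}

theorem frobNorm_eq_norm (M : Matrix (Fin m) (Fin n) ℝ) : frobNorm M = ‖M‖ := by
  simp [frobNorm, frobenius_norm_def, Real.sqrt_eq_rpow]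

theorem frobNorm_nonneg (M : Matrix (Fin m) (Fin n) ℝ) : 0 ≤ frobNorm M :=
  Real.sqrt_nonneg _

theorem frobNorm_transpose (M : Matrix (Fin m) (Fin n) ℝ) : frobNorm Mᵀ = frobNorm M := by
  simp only [frobNorm_eq_norm, frobenius_norm_transpose]

theorem frobNorm_mul_le (A : Matrix (Fin l) (Fin m) ℝ) (B : Matrix (Fin m) (Fin n) ℝ) :
    frobNorm (A * B) ≤ frobNorm A * frobNorm B := by
  simpa only [frobNorm_eq_norm] using frobenius_norm_mul A B

theorem norm_toLp_mulVec_le_frobNorm_mul (M : Matrix (Fin m) (Fin n) ℝ) (x : Fin n → ℝ) :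
    ‖toLp 2 (M *ᵥ x)‖ ≤ frobNorm M * ‖toLp 2 x‖ := by
  simpa only [← frobenius_norm_replicateCol (ι := Unit), replicateCol_mulVec, frobNorm_eq_norm]
    using frobenius_norm_mul M (replicateCol Unit x)

end Frobenius

section Columns

variable {l m n : ℕ}

theorem frobNorm_sq_eq_sum_norm_sq_col (M : Matrix (Fin m) (Fin n) ℝ) :
    frobNorm M ^ 2 = ∑ j, ‖toLp 2 (Mᵀ j)‖ ^ 2 := by
  rw [frobNorm, Real.sq_sqrt (by positivity), Finset.sum_comm]
  simp only [EuclideanSpace.real_norm_sq_eq, transpose_apply]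

theorem transpose_mul_apply_eq_mulVec (A : Matrix (Fin l) (Fin m) ℝ)
    (M : Matrix (Fin m) (Fin n) ℝ) (j : Fin n) : (A * M)ᵀ j = A *ᵥ Mᵀ j := by
  ext i
  simp [mul_apply, mulVec, dotProduct]

theorem frobNorm_sq_eq_add_of_transpose_mul_self_left {U : Matrix (Fin m) (Fin l) ℝ}
    (hU : Uᵀ * U = 1) (M : Matrix (Fin m) (Fin n) ℝ) :
    frobNorm M ^ 2 = frobNorm (Uᵀ * M) ^ 2 + frobNorm ((1 - U * Uᵀ) * M) ^ 2 := by
  simp only [frobNorm_sq_eq_sum_norm_sq_col, transpose_mul_apply_eq_mulVec,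
    ← Finset.sum_add_distrib]
  exact Finset.sum_congr rfl fun j _ => norm_sq_toLp_eq_add_of_transpose_mul_self hU _

theorem frobNorm_sq_eq_add_of_transpose_mul_self_right {V : Matrix (Fin n) (Fin l) ℝ}
    (hV : Vᵀ * V = 1) (M : Matrix (Fin m) (Fin n) ℝ) :
    frobNorm M ^ 2 = frobNorm (M * V) ^ 2 + frobNorm (M * (1 - V * Vᵀ)) ^ 2 := by
  rw [← frobNorm_transpose M, frobNorm_sq_eq_add_of_transpose_mul_self_left hV Mᵀ,
    ← frobNorm_transpose (M * V), ← frobNorm_transpose (M * (1 - V * Vᵀ))]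
  simp [transpose_mul, transpose_sub]

theorem mul_frobNorm_le_frobNorm_mul {B : Matrix (Fin m) (Fin n) ℝ} {c : ℝ} (hc : 0 ≤ c)
    (hB : ∀ y, c * ‖toLp 2 y‖ ≤ ‖toLp 2 (B *ᵥ y)‖) (M : Matrix (Fin n) (Fin l) ℝ) :
    c * frobNorm M ≤ frobNorm (B * M) := by
  refine (pow_le_pow_iff_left₀ (mul_nonneg hc (frobNorm_nonneg M)) (frobNorm_nonneg _)
    two_ne_zero).1 ?_
  rw [mul_pow, frobNorm_sq_eq_sum_norm_sq_col, frobNorm_sq_eq_sum_norm_sq_col, Finset.mul_sum]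
  refine Finset.sum_le_sum fun j _ => ?_
  rw [transpose_mul_apply_eq_mulVec, ← mul_pow]
  exact pow_le_pow_left₀ (mul_nonneg hc (norm_nonneg _)) (hB _) 2

theorem frobNorm_mul_inv_mul_le {A : Matrix (Fin l) (Fin m) ℝ} {B : Matrix (Fin m) (Fin m) ℝ}
    {c : ℝ} (hc : 0 ≤ c) (hB : ∀ y, c * ‖toLp 2 y‖ ≤ ‖toLp 2 (B *ᵥ y)‖) (hBu : IsUnit B)
    (N : Matrix (Fin m) (Fin n) ℝ) : c * frobNorm (A * (B⁻¹ * N)) ≤ frobNorm A * frobNorm N := by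
  have hinv : c * frobNorm (B⁻¹ * N) ≤ frobNorm N := by
    simpa [← Matrix.mul_assoc, mul_nonsing_inv _ ((isUnit_iff_isUnit_det _).1 hBu)] using
      mul_frobNorm_le_frobNorm_mul hc hB (B⁻¹ * N)
  calc c * frobNorm (A * (B⁻¹ * N)) ≤ frobNorm A * (c * frobNorm (B⁻¹ * N)) := by
        rw [mul_left_comm]
        exact mul_le_mul_of_nonneg_left (frobNorm_mul_le A (B⁻¹ * N)) hc
    _ ≤ frobNorm A * frobNorm N := mul_le_mul_of_nonneg_left hinv (frobNorm_nonneg A)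

end Columns

section Spectral

variable {m n : ℕ}

theorem specNorm_nonneg (M : Matrix (Fin m) (Fin n) ℝ) : 0 ≤ specNorm M :=
  norm_nonneg _

theorem norm_toLp_mulVec_le_specNorm_mul (M : Matrix (Fin m) (Fin n) ℝ) (x : Fin n → ℝ) :
    ‖toLp 2 (M *ᵥ x)‖ ≤ specNorm M * ‖toLp 2 x‖ := by
  simpa [specNorm] using (LinearMap.toContinuousLinearMap (toEuclideanLin M)).le_opNorm (toLp 2 x)

theorem specNorm_le_frobNorm (M : Matrix (Fin m) (Fin n) ℝ) : specNorm M ≤ frobNorm M :=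
  ContinuousLinearMap.opNorm_le_bound _ (frobNorm_nonneg M) fun x => by
    simpa [toLpLin_apply] using norm_toLp_mulVec_le_frobNorm_mul M x.ofLp

end Spectral

section RankFactorization

variable {K : Type*} [Field K] {m n ι : Type*} [Fintype n] [Fintype ι]

theorem exists_eq_mul_mul_of_rank_mul_eq {X : Matrix m n K} {R : Matrix n ι K}
    (h : (X * R).rank = X.rank) : ∃ C : Matrix ι n K, X = X * R * C := by
  classical
  have hle : LinearMap.range (X * R).mulVecLin ≤ LinearMap.range X.mulVecLin := by
    rw [mulVecLin_mul]
    exact LinearMap.range_comp_le_range _ _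
  have hrange := Submodule.eq_of_le_of_finrank_le hle h.ge
  have hcol : ∀ j, ∃ c, (X * R) *ᵥ c = Xᵀ j := fun j => by
    have hj : Xᵀ j ∈ LinearMap.range X.mulVecLin := ⟨Pi.single j 1, mulVec_single_one _ _⟩
    rw [← hrange] at hj
    exact hj
  choose c hc using hcol
  refine ⟨(of c)ᵀ, ?_⟩
  ext i j
  simpa [mulVec, dotProduct, mul_apply] using (congrFun (hc j) i).symm

variable [Fintype m] [DecidableEq ι]

theorem eq_mul_inv_mul_of_rank_eq {X : Matrix m n K} (L : Matrix ι m K) (R : Matrix n ι K)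
    (hX : X.rank = Fintype.card ι) (hB : IsUnit (L * X * R)) :
    X = X * R * (L * X * R)⁻¹ * (L * X) := by
  have hXR : (X * R).rank = X.rank := by
    refine le_antisymm (rank_mul_le_left X R) ?_
    calc X.rank = (L * X * R).rank := by rw [hX, rank_of_isUnit _ hB, Fintype.card]
      _ ≤ (X * R).rank := by rw [Matrix.mul_assoc]; exact rank_mul_le_right _ _
  obtain ⟨C, hC⟩ := exists_eq_mul_mul_of_rank_mul_eq hXR
  have hLX : L * X = L * X * R * C := by
    conv_lhs => rw [hC]
    simp only [Matrix.mul_assoc]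
  calc X = X * R * C := hC
    _ = X * R * ((L * X * R)⁻¹ * (L * X * R * C)) := by
      rw [← Matrix.mul_assoc _ (L * X * R), nonsing_inv_mul _ ((isUnit_iff_isUnit_det _).1 hB),
        Matrix.one_mul]
    _ = X * R * (L * X * R)⁻¹ * (L * X) := by rw [← hLX, Matrix.mul_assoc (X * R)]

end RankFactorization

section LowRank

variable {m n r : ℕ} {U : Matrix (Fin m) (Fin r) ℝ} {V : Matrix (Fin n) (Fin r) ℝ}

theorem norm_toLp_transpose_mul_mul_mulVec_le (hU : Uᵀ * U = 1) (hV : Vᵀ * V = 1)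
    (E : Matrix (Fin m) (Fin n) ℝ) (y : Fin r → ℝ) :
    ‖toLp 2 ((Uᵀ * E * V) *ᵥ y)‖ ≤ specNorm E * ‖toLp 2 y‖ := by
  rw [← mulVec_mulVec, ← mulVec_mulVec]
  calc _ ≤ ‖toLp 2 (E *ᵥ (V *ᵥ y))‖ := norm_toLp_transpose_mulVec_le hU _
    _ ≤ specNorm E * ‖toLp 2 (V *ᵥ y)‖ := norm_toLp_mulVec_le_specNorm_mul _ _
    _ = specNorm E * ‖toLp 2 y‖ := by rw [norm_toLp_mulVec_of_transpose_mul_self hV]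

theorem sub_specNorm_mul_norm_toLp_le_norm_transpose_mul_mul_mulVec (hU : Uᵀ * U = 1)
    (hV : Vᵀ * V = 1) {σ : Fin r → ℝ} {c : ℝ} (hc : 0 ≤ c) (hσ : ∀ i, c ≤ σ i)
    (E : Matrix (Fin m) (Fin n) ℝ) (y : Fin r → ℝ) :
    (c - specNorm E) * ‖toLp 2 y‖ ≤ ‖toLp 2 ((Uᵀ * (U * diagonal σ * Vᵀ + E) * V) *ᵥ y)‖ := by
  have hsplit : Uᵀ * (U * diagonal σ * Vᵀ + E) * V = diagonal σ + Uᵀ * E * V := by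
    simp only [Matrix.mul_add, Matrix.add_mul, ← Matrix.mul_assoc, hU, Matrix.one_mul]
    simp only [Matrix.mul_assoc, hV, Matrix.mul_one]
  rw [hsplit]
  exact sub_mul_norm_toLp_le_norm_add_mulVec (mul_norm_toLp_le_norm_diagonal_mulVec hc hσ)
    (norm_toLp_transpose_mul_mul_mulVec_le hU hV _) y

theorem one_sub_mul_transpose_mul_add (hU : Uᵀ * U = 1) (D : Matrix (Fin r) (Fin r) ℝ)
    (E : Matrix (Fin m) (Fin n) ℝ) : (1 - U * Uᵀ) * (U * D * Vᵀ + E) = (1 - U * Uᵀ) * E := by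
  rw [Matrix.mul_add, Matrix.mul_assoc U, ← Matrix.mul_assoc, one_sub_mul_transpose_mul_self hU,
    Matrix.zero_mul, zero_add]

theorem add_mul_one_sub_mul_transpose (hV : Vᵀ * V = 1) (D : Matrix (Fin r) (Fin r) ℝ)
    (E : Matrix (Fin m) (Fin n) ℝ) : (U * D * Vᵀ + E) * (1 - V * Vᵀ) = E * (1 - V * Vᵀ) := by
  rw [Matrix.add_mul, Matrix.mul_assoc _ Vᵀ, transpose_mul_one_sub_mul_transpose hV,
    Matrix.mul_zero, zero_add]

theorem one_sub_mul_transpose_mul_mul_one_sub_eq (hU : Uᵀ * U = 1) (hV : Vᵀ * V = 1)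
    {D : Matrix (Fin r) (Fin r) ℝ} {E : Matrix (Fin m) (Fin n) ℝ} (hX : (U * D * Vᵀ + E).rank = r)
    (hB : IsUnit (Uᵀ * (U * D * Vᵀ + E) * V)) :
    (1 - U * Uᵀ) * E * (1 - V * Vᵀ) = (1 - U * Uᵀ) * E * V *
      ((Uᵀ * (U * D * Vᵀ + E) * V)⁻¹ * (Uᵀ * E * (1 - V * Vᵀ))) := by
  have hfac := eq_mul_inv_mul_of_rank_eq Uᵀ V (hX.trans (Fintype.card_fin r).symm) hB
  calc (1 - U * Uᵀ) * E * (1 - V * Vᵀ)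
      = (1 - U * Uᵀ) * ((U * D * Vᵀ + E) * (1 - V * Vᵀ)) := by
        rw [add_mul_one_sub_mul_transpose hV, Matrix.mul_assoc]
    _ = (1 - U * Uᵀ) * ((U * D * Vᵀ + E) * V * (Uᵀ * (U * D * Vᵀ + E) * V)⁻¹ *
          (Uᵀ * (U * D * Vᵀ + E)) * (1 - V * Vᵀ)) := by rw [← hfac]
    _ = (1 - U * Uᵀ) * (U * D * Vᵀ + E) * V * ((Uᵀ * (U * D * Vᵀ + E) * V)⁻¹ *
          (Uᵀ * ((U * D * Vᵀ + E) * (1 - V * Vᵀ)))) := by simp only [Matrix.mul_assoc]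
    _ = _ := by
      rw [one_sub_mul_transpose_mul_add hU, add_mul_one_sub_mul_transpose hV,
        ← Matrix.mul_assoc Uᵀ E]

theorem frobNorm_sq_add_sq_add_sq_le (hU : Uᵀ * U = 1) (hV : Vᵀ * V = 1)
    (E : Matrix (Fin m) (Fin n) ℝ) :
    frobNorm ((1 - U * Uᵀ) * E * V) ^ 2 + frobNorm (Uᵀ * E * (1 - V * Vᵀ)) ^ 2 +
      frobNorm ((1 - U * Uᵀ) * E * (1 - V * Vᵀ)) ^ 2 ≤ frobNorm E ^ 2 := by
  have hE := frobNorm_sq_eq_add_of_transpose_mul_self_right hV E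
  have hEV := frobNorm_sq_eq_add_of_transpose_mul_self_left hU (E * V)
  have hEQ := frobNorm_sq_eq_add_of_transpose_mul_self_left hU (E * (1 - V * Vᵀ))
  simp only [← Matrix.mul_assoc] at hEV hEQ
  linarith [sq_nonneg (frobNorm (Uᵀ * E * V))]

end LowRank

theorem stmt_12_general {n₁ n₂ r : ℕ}
    (Xt Xs : Matrix (Fin n₁) (Fin n₂) ℝ) (hXt : Xt.rank = r)
    (Us : Matrix (Fin n₁) (Fin r) ℝ) (Vs : Matrix (Fin n₂) (Fin r) ℝ)
    (hUs : Usᵀ * Us = 1) (hVs : Vsᵀ * Vs = 1)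
    (σ : Fin r → ℝ)
    (hXs : Xs = Us * Matrix.diagonal σ * Vsᵀ)
    (sr : ℝ) (hsr : ∀ i, sr ≤ σ i)
    (hclose : specNorm (Xt - Xs) < sr) :
    frobNorm ((1 - Us * Usᵀ) * Xt * (1 - Vs * Vsᵀ)) ≤
      (frobNorm (Xt - Xs)) ^ 2 / sr := by
  subst hXs
  obtain ⟨E, rfl⟩ : ∃ E, Xt = Us * diagonal σ * Vsᵀ + E := ⟨_, (add_sub_cancel _ Xt).symm⟩
  rw [add_sub_cancel_left] at hclose ⊢
  rw [one_sub_mul_transpose_mul_add hUs]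
  have hδ := specNorm_nonneg E
  have hgap : 0 < sr - specNorm E := sub_pos.2 hclose
  have hsr0 : 0 < sr := hδ.trans_lt hclose
  have hB := sub_specNorm_mul_norm_toLp_le_norm_transpose_mul_mul_mulVec hUs hVs hsr0.le hsr E
  have hBu := isUnit_of_mul_norm_toLp_le hgap hB
  have hcorner := frobNorm_mul_inv_mul_le hgap.le hB hBu (A := (1 - Us * Usᵀ) * E * Vs)
    (Usᵀ * E * (1 - Vs * Vsᵀ))
  rw [← one_sub_mul_transpose_mul_mul_one_sub_eq hUs hVs hXt hBu] at hcorner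
  have hpyth := frobNorm_sq_add_sq_add_sq_le hUs hVs E
  have hδF := pow_le_pow_left₀ hδ (specNorm_le_frobNorm E) 2
  rw [le_div_iff₀ hsr0]
  linarith [sq_nonneg (frobNorm ((1 - Us * Usᵀ) * E * Vs) - frobNorm (Usᵀ * E * (1 - Vs * Vsᵀ))),
    sq_nonneg (frobNorm ((1 - Us * Usᵀ) * E * (1 - Vs * Vsᵀ)) - specNorm E)]

theorem stmt_12 {n₁ n₂ r : ℕ}
    (Xt Xs : Matrix (Fin n₁) (Fin n₂) ℝ) (hXt : Xt.rank = r)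
    (Us : Matrix (Fin n₁) (Fin r) ℝ) (Vs : Matrix (Fin n₂) (Fin r) ℝ)
    (hUs : Usᵀ * Us = 1) (hVs : Vsᵀ * Vs = 1)
    (σ : Fin r → ℝ) (hσ : ∀ i, 0 < σ i)
    (hXs : Xs = Us * Matrix.diagonal σ * Vsᵀ)
    (sr : ℝ) (hsr : ∀ i, sr ≤ σ i) (hatt : ∃ i, σ i = sr)
    (hclose : specNorm (Xt - Xs) < sr) :
    frobNorm ((1 - Us * Usᵀ) * Xt * (1 - Vs * Vsᵀ)) ≤
      (frobNorm (Xt - Xs)) ^ 2 / sr :=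
  stmt_12_general Xt Xs hXt Us Vs hUs hVs σ hXs sr hsr hclose
end
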